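/- arXiv:1609.09010 — 2 statements merged into one kernel-verified Lean document; each statement's English description precedes it below -/
import Mathlib

section
/- Let Ĥ be a symmetric p×p real matrix with eigendecomposition Ĥ = U D Uᵀ (U orthogonal, D diagonal with entries d_i), and let γ > 0. Then Θ* = (1/2) U (D + √(D² + (4/γ)I)) Uᵀ is symmetric positive definite and satisfies the stationarity equation −Θ*⁻¹ + γ(Θ* − Ĥ) = 0, i.e., Θ* minimizes Θ ↦ −log det Θ + (γ/2)‖Θ − Ĥ‖_F² over symmetric positive definite matrices. -/
open Matrix

/-- Squared Frobenius norm. -/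
def frobSq {p : ℕ} (A : Matrix (Fin p) (Fin p) ℝ) : ℝ :=
  ∑ i, ∑ j, (A i j) ^ 2

section Aux

variable {p : ℕ}

lemma conj3 (U : Matrix (Fin p) (Fin p) ℝ) (hU' : Uᵀ * U = 1) (e f : Fin p → ℝ) :
    (U * Matrix.diagonal e * Uᵀ) * (U * Matrix.diagonal f * Uᵀ)
      = U * Matrix.diagonal (fun i => e i * f i) * Uᵀ := by
  simp only [mul_assoc]
  rw [← mul_assoc Uᵀ U, hU', one_mul, ← mul_assoc (Matrix.diagonal e), diagonal_mul_diagonal]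

lemma sym_conj (U : Matrix (Fin p) (Fin p) ℝ) (e : Fin p → ℝ) :
    (U * Matrix.diagonal e * Uᵀ)ᵀ = U * Matrix.diagonal e * Uᵀ := by
  rw [transpose_mul, transpose_mul, transpose_transpose, diagonal_transpose, mul_assoc]

lemma posdef_conj (U : Matrix (Fin p) (Fin p) ℝ) (hU : U * Uᵀ = 1)
    (e : Fin p → ℝ) (he : ∀ i, 0 < e i) :
    (U * Matrix.diagonal e * Uᵀ).PosDef := by
  rw [posDef_iff_dotProduct_mulVec]
  constructor
  · unfold Matrix.IsHermitian
    rw [conjTranspose_eq_transpose_of_trivial, sym_conj]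
  · intro x hx
    set y := Uᵀ *ᵥ x with hy
    have hyx : U *ᵥ y = x := by
      rw [hy, mulVec_mulVec, hU, one_mulVec]
    have hyne : y ≠ 0 := fun h => hx (by rw [← hyx, h, mulVec_zero])
    have key : star x ⬝ᵥ (U * Matrix.diagonal e * Uᵀ) *ᵥ x
        = ∑ i, y i * (e i * y i) := by
      rw [star_trivial, ← mulVec_mulVec, ← mulVec_mulVec, dotProduct_mulVec, ← mulVec_transpose,
        ← hy]
      simp [dotProduct, mulVec_diagonal]
    rw [key]
    obtain ⟨i, hi⟩ : ∃ i, y i ≠ 0 := by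
      by_contra h; push_neg at h; exact hyne (funext h)
    refine Finset.sum_pos' (fun j _ => ?_) ⟨i, Finset.mem_univ i, ?_⟩
    · have := (he j).le; nlinarith [sq_nonneg (y j)]
    · have := he i; have h2 : 0 < y i * y i := mul_self_pos.mpr hi; nlinarith

lemma inv_conj (U : Matrix (Fin p) (Fin p) ℝ) (hU : U * Uᵀ = 1) (hU' : Uᵀ * U = 1)
    (e : Fin p → ℝ) (he : ∀ i, e i ≠ 0) :
    (U * Matrix.diagonal e * Uᵀ)⁻¹ = U * Matrix.diagonal (fun i => (e i)⁻¹) * Uᵀ := by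
  apply inv_eq_right_inv
  rw [conj3 U hU' ]
  have : (fun i => e i * (e i)⁻¹) = fun _ => (1:ℝ) := by
    funext i; exact mul_inv_cancel₀ (he i)
  rw [this, diagonal_one, mul_one, hU]

lemma det_conj (U : Matrix (Fin p) (Fin p) ℝ) (hU : U * Uᵀ = 1) (e : Fin p → ℝ) :
    (U * Matrix.diagonal e * Uᵀ).det = ∏ i, e i := by
  rw [det_mul_right_comm, hU, one_mul, det_diagonal]

lemma trace_eq_sum_eig (M : Matrix (Fin p) (Fin p) ℝ) (hM : M.IsHermitian) :
    M.trace = ∑ i, hM.eigenvalues i := by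
  simpa using hM.trace_eq_sum_eigenvalues

lemma logdet_le (M : Matrix (Fin p) (Fin p) ℝ) (hM : M.PosDef) :
    Real.log M.det ≤ M.trace - p := by
  have hev := hM.eigenvalues_pos
  rw [hM.isHermitian.det_eq_prod_eigenvalues, trace_eq_sum_eig M hM.isHermitian]
  simp only [RCLike.ofReal_real_eq_id, id_eq]
  rw [Real.log_prod (fun i _ => (hev i).ne')]
  have : ∀ i ∈ Finset.univ, Real.log (hM.isHermitian.eigenvalues i)
      ≤ hM.isHermitian.eigenvalues i - 1 :=
    fun i _ => Real.log_le_sub_one_of_pos (hev i)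
  calc ∑ i, Real.log (hM.isHermitian.eigenvalues i)
      ≤ ∑ i, (hM.isHermitian.eigenvalues i - 1) := Finset.sum_le_sum this
    _ = ∑ i, hM.isHermitian.eigenvalues i - p := by
        rw [Finset.sum_sub_distrib]; simp

lemma frob_expand (A B : Matrix (Fin p) (Fin p) ℝ) :
    frobSq (A + B) = frobSq A + 2 * (∑ i, ∑ j, A i j * B i j) + frobSq B := by
  simp only [frobSq, Matrix.add_apply, add_sq, Finset.sum_add_distrib, Finset.mul_sum]
  ring_nf

lemma frob_nonneg (A : Matrix (Fin p) (Fin p) ℝ) : 0 ≤ frobSq A := by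
  apply Finset.sum_nonneg; intro i _; apply Finset.sum_nonneg; intro j _; positivity

lemma inner_trace (A B : Matrix (Fin p) (Fin p) ℝ) (hA : Aᵀ = A) :
    ∑ i, ∑ j, A i j * B i j = (A * B).trace := by
  simp only [Matrix.trace, Matrix.diag, Matrix.mul_apply]
  rw [Finset.sum_comm]
  refine Finset.sum_congr rfl fun i _ => Finset.sum_congr rfl fun j _ => ?_
  have : A j i = A i j := by nth_rewrite 1 [← hA]; rfl
  rw [this]

lemma posdef_sandwich (B Θ C : Matrix (Fin p) (Fin p) ℝ) (hB : Bᵀ = B)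
    (hCB : C * B = 1) (hΘ : Θ.PosDef) : (B * Θ * B).PosDef := by
  have hΘs : Θᵀ = Θ := hΘ.isHermitian
  rw [posDef_iff_dotProduct_mulVec]
  constructor
  · unfold Matrix.IsHermitian
    rw [conjTranspose_eq_transpose_of_trivial, transpose_mul, transpose_mul, hB, hΘs, mul_assoc]
  · intro x hx
    have hBx : B *ᵥ x ≠ 0 := by
      intro h
      apply hx
      have : C *ᵥ (B *ᵥ x) = x := by rw [mulVec_mulVec, hCB, one_mulVec]
      rw [← this, h, mulVec_zero]
    have key : star x ⬝ᵥ (B * Θ * B) *ᵥ x = star (B *ᵥ x) ⬝ᵥ Θ *ᵥ (B *ᵥ x) := by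
      rw [star_trivial, star_trivial, ← mulVec_mulVec, ← mulVec_mulVec, dotProduct_mulVec,
        ← mulVec_transpose, hB]
    rw [key]
    exact hΘ.dotProduct_mulVec_pos hBx

end Aux

theorem stmt8 (p : ℕ) (γ : ℝ) (hγ : 0 < γ)
    (U : Matrix (Fin p) (Fin p) ℝ) (d : Fin p → ℝ)
    (hU : U * Uᵀ = 1) (hU' : Uᵀ * U = 1)
    (Hhat : Matrix (Fin p) (Fin p) ℝ)
    (hH : Hhat = U * Matrix.diagonal d * Uᵀ) :
    let Θstar : Matrix (Fin p) (Fin p) ℝ :=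
      (1 / 2 : ℝ) •
        (U * Matrix.diagonal (fun i => d i + Real.sqrt (d i ^ 2 + 4 / γ)) * Uᵀ)
    Θstar.PosDef ∧
    (-(Θstar⁻¹) + γ • (Θstar - Hhat) = 0) ∧
    (∀ Θ : Matrix (Fin p) (Fin p) ℝ, Θ.PosDef →
      -Real.log Θstar.det + (γ / 2) * frobSq (Θstar - Hhat)
        ≤ -Real.log Θ.det + (γ / 2) * frobSq (Θ - Hhat)) := by
  intro Θstar
  set s : Fin p → ℝ := fun i => Real.sqrt (d i ^ 2 + 4 / γ) with hsdef
  set lam : Fin p → ℝ := fun i => (d i + s i) / 2 with hlamdef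
  have hsq : ∀ i, s i ^ 2 = d i ^ 2 + 4 / γ := fun i =>
    Real.sq_sqrt (by positivity)
  have hsnn : ∀ i, 0 ≤ s i := fun i => Real.sqrt_nonneg _
  have h4γ : 0 < 4 / γ := by positivity
  have hlam : ∀ i, 0 < lam i := by
    intro i
    have h1 := hsq i
    have h2 := hsnn i
    simp only [hlamdef]
    nlinarith [sq_nonneg (d i + s i), sq_nonneg (d i - s i)]
  have hkey : ∀ i, lam i * (γ * (lam i - d i)) = 1 := by
    intro i
    have h1 := hsq i
    field_simp at h1
    simp only [hlamdef]
    field_simp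
    linear_combination h1
  -- rewrite Θstar
  have hΘeq : Θstar = U * Matrix.diagonal lam * Uᵀ := by
    show (1 / 2 : ℝ) • (U * Matrix.diagonal (fun i => d i + s i) * Uᵀ) = _
    have he : lam = (1 / 2 : ℝ) • (fun i => d i + s i) := by
      funext i; simp [hlamdef]; ring
    rw [he, Matrix.diagonal_smul, mul_smul_comm, smul_mul_assoc]
  have hpos : Θstar.PosDef := by rw [hΘeq]; exact posdef_conj U hU lam hlam
  have hΘinv : Θstar⁻¹ = U * Matrix.diagonal (fun i => (lam i)⁻¹) * Uᵀ := by
    rw [hΘeq]; exact inv_conj U hU hU' lam (fun i => (hlam i).ne')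
  have hstat : γ • (Θstar - Hhat) = Θstar⁻¹ := by
    rw [hΘinv, hΘeq, hH]
    have hsub : U * Matrix.diagonal lam * Uᵀ - U * Matrix.diagonal d * Uᵀ
        = U * Matrix.diagonal (fun i => lam i - d i) * Uᵀ := by
      rw [← Matrix.diagonal_sub, Matrix.mul_sub, Matrix.sub_mul]
    rw [hsub, ← smul_mul_assoc, ← mul_smul_comm, ← Matrix.diagonal_smul]
    have hfun : (γ • fun i => lam i - d i) = fun i => (lam i)⁻¹ := by
      funext i
      have hne := (hlam i).ne'
      have hk := hkey i
      simp only [Pi.smul_apply, smul_eq_mul]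
      field_simp
      linear_combination hk
    rw [hfun]
  refine ⟨hpos, by rw [hstat]; exact neg_add_cancel _, ?_⟩
  -- optimality
  intro Θ hΘ
  set μ : Fin p → ℝ := fun i => Real.sqrt (lam i) with hμdef
  have hμpos : ∀ i, 0 < μ i := fun i => Real.sqrt_pos.mpr (hlam i)
  set B : Matrix (Fin p) (Fin p) ℝ := U * Matrix.diagonal (fun i => (μ i)⁻¹) * Uᵀ with hBdef
  set C : Matrix (Fin p) (Fin p) ℝ := U * Matrix.diagonal μ * Uᵀ with hCdef
  have hCB : C * B = 1 := by
    rw [hCdef, hBdef, conj3 U hU']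
    have : (fun i => μ i * (μ i)⁻¹) = fun _ => (1:ℝ) := by
      funext i; exact mul_inv_cancel₀ (hμpos i).ne'
    rw [this, diagonal_one, mul_one, hU]
  have hBsym : Bᵀ = B := sym_conj U _
  have hBB : B * B = Θstar⁻¹ := by
    rw [hBdef, conj3 U hU', hΘinv]
    have hfun : (fun i => (μ i)⁻¹ * (μ i)⁻¹) = fun i => (lam i)⁻¹ := by
      funext i
      rw [← mul_inv, Real.mul_self_sqrt (hlam i).le]
    rw [hfun]
  set M : Matrix (Fin p) (Fin p) ℝ := B * Θ * B with hMdef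
  have hMpos : M.PosDef := posdef_sandwich B Θ C hBsym hCB hΘ
  have hdetΘ : 0 < Θ.det := hΘ.det_pos
  have hdetΘs : 0 < Θstar.det := hpos.det_pos
  have hinvdet : (Θstar⁻¹).det = (Θstar.det)⁻¹ := by
    rw [Matrix.det_nonsing_inv, Ring.inverse_eq_inv]
  have hdetM : M.det = Θ.det * (Θstar.det)⁻¹ := by
    rw [hMdef, det_mul, det_mul,
      show B.det * Θ.det * B.det = Θ.det * (B.det * B.det) from by ring,
      ← det_mul, hBB, hinvdet]
  have htrM : M.trace = (Θstar⁻¹ * Θ).trace := by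
    rw [hMdef, Matrix.trace_mul_comm (B * Θ) B, ← mul_assoc, hBB]
  have hlogM : Real.log M.det = Real.log Θ.det - Real.log Θstar.det := by
    rw [hdetM, Real.log_mul hdetΘ.ne' (inv_ne_zero hdetΘs.ne'), Real.log_inv]
    ring
  have hineq : Real.log Θ.det - Real.log Θstar.det ≤ (Θstar⁻¹ * Θ).trace - p := by
    rw [← hlogM, ← htrM]
    exact logdet_le M hMpos
  -- frobenius expansion
  set Z : Matrix (Fin p) (Fin p) ℝ := Θstar - Hhat with hZdef
  set W : Matrix (Fin p) (Fin p) ℝ := Θ - Θstar with hWdef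
  have hZW : Θ - Hhat = Z + W := by rw [hZdef, hWdef]; abel
  have hfe : frobSq (Θ - Hhat) = frobSq Z + 2 * (∑ i, ∑ j, Z i j * W i j) + frobSq W := by
    rw [hZW]; exact frob_expand Z W
  have hZsym : Zᵀ = Z := by
    rw [hZdef, Matrix.transpose_sub, hH, sym_conj, hΘeq, sym_conj]
  have hinner : γ * (∑ i, ∑ j, Z i j * W i j) = (Θstar⁻¹ * Θ).trace - p := by
    have h1 : ∑ i, ∑ j, Z i j * W i j = (Z * W).trace := inner_trace Z W hZsym
    have h2 : γ * (Z * W).trace = ((γ • Z) * W).trace := by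
      rw [smul_mul_assoc, trace_smul]; simp
    have h3 : (γ • Z) = Θstar⁻¹ := hstat
    have h4 : Θstar⁻¹ * W = Θstar⁻¹ * Θ - 1 := by
      rw [hWdef, Matrix.mul_sub, Matrix.nonsing_inv_mul _ hpos.det_pos.ne'.isUnit]
    rw [h1, h2, h3, h4, trace_sub, trace_one]
    simp
  have hfrobW : 0 ≤ frobSq W := frob_nonneg W
  have hexpand : (γ / 2) * frobSq (Θ - Hhat)
      = (γ / 2) * frobSq Z + γ * (∑ i, ∑ j, Z i j * W i j) + (γ / 2) * frobSq W := by
    rw [hfe]; ring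
  have hWterm : 0 ≤ (γ / 2) * frobSq W := mul_nonneg (by positivity) hfrobW
  rw [hexpand, hZdef]
  linarith [hineq, hinner]
end

section
/- Let C be a symmetric p×p matrix with eigendecomposition C = U D Uᵀ (U orthogonal, D diagonal), γ > 0, λ > 0. Then Z* = U max(D − (λ/γ)I, 0) Uᵀ (entrywise max on diagonal) minimizes Z ↦ λ·trace(Z) + (γ/2)‖Z − C‖_F² over the cone of symmetric positive semidefinite matrices. -/
/-!
Conjugation by the orthogonal matrix `U` preserves the trace and the Frobenius norm and turns `C`
into `diagonal d`, so `Z` may be replaced by `W = Uᵀ Z U`, which is again positive semidefinite and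
hence has a nonnegative diagonal. Discarding the off-diagonal entries of `W - diagonal d` can only
decrease the objective, which then splits into the scalar problems
`minimize λ w + (γ/2) (w - dᵢ)² over w ≥ 0`, solved by `w = max (dᵢ - λ/γ) 0`.
-/

open Matrix

section Conjugation

variable {n R : Type*} [Fintype n] [DecidableEq n]

lemma transpose_mul_mul_mul_transpose_mul [Semiring R] {U : Matrix n n R} (hU : Uᵀ * U = 1)
    (M : Matrix n n R) : Uᵀ * (U * M * Uᵀ) * U = M := by
  simp only [Matrix.mul_assoc, hU, Matrix.mul_one, ← Matrix.mul_assoc Uᵀ U, Matrix.one_mul]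

lemma trace_transpose_mul_mul [CommSemiring R] {U : Matrix n n R} (hU : U * Uᵀ = 1)
    (A : Matrix n n R) : (Uᵀ * A * U).trace = A.trace := by
  rw [trace_mul_cycle, hU, Matrix.one_mul]

end Conjugation

section Frobenius

variable {p : ℕ}

lemma frobSq_eq_trace_transpose_mul (A : Matrix (Fin p) (Fin p) ℝ) :
    frobSq A = (Aᵀ * A).trace := by
  simp only [frobSq, trace, diag_apply, mul_apply, transpose_apply, sq]
  exact Finset.sum_comm

lemma frobSq_transpose_mul_mul {U : Matrix (Fin p) (Fin p) ℝ} (hU : U * Uᵀ = 1)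
    (A : Matrix (Fin p) (Fin p) ℝ) : frobSq (Uᵀ * A * U) = frobSq A := by
  have hcancel : Uᵀ * (Aᵀ * U) * (Uᵀ * A * U) = Uᵀ * (Aᵀ * A) * U := by
    simp only [Matrix.mul_assoc, ← Matrix.mul_assoc U Uᵀ, hU, Matrix.one_mul]
  rw [frobSq_eq_trace_transpose_mul, frobSq_eq_trace_transpose_mul, transpose_mul, transpose_mul,
    transpose_transpose, hcancel, trace_transpose_mul_mul hU]

lemma frobSq_diagonal (v : Fin p → ℝ) : frobSq (diagonal v) = ∑ i, v i ^ 2 := by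
  refine Finset.sum_congr rfl fun i _ => ?_
  rw [Finset.sum_eq_single i (fun j _ hj => by simp [diagonal_apply_ne _ hj.symm]) (by simp),
    diagonal_apply_eq]

lemma sum_sq_diag_le_frobSq (A : Matrix (Fin p) (Fin p) ℝ) : ∑ i, A i i ^ 2 ≤ frobSq A :=
  Finset.sum_le_sum fun i _ =>
    Finset.single_le_sum (f := fun j => A i j ^ 2) (fun _ _ => sq_nonneg _) (Finset.mem_univ i)

end Frobenius

lemma add_mul_sq_max_sub_div_le {γ lam d w : ℝ} (hγ : 0 < γ) (hw : 0 ≤ w) :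
    lam * max (d - lam / γ) 0 + γ / 2 * (max (d - lam / γ) 0 - d) ^ 2 ≤
      lam * w + γ / 2 * (w - d) ^ 2 := by
  have hdiv : lam / γ * γ = lam := div_mul_cancel₀ _ hγ.ne'
  rcases le_total (d - lam / γ) 0 with h | h
  · rw [max_eq_right h]
    have hd : γ * d ≤ lam := by nlinarith
    nlinarith [mul_nonneg hγ.le (sq_nonneg w), mul_nonneg hw (sub_nonneg.mpr hd)]
  · -- completing the square: the right side exceeds the left by `γ/2 (w - (d - lam/γ))²`
    rw [max_eq_left h]
    nlinarith [mul_nonneg hγ.le (sq_nonneg (w - (d - lam / γ)))]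

noncomputable def proxObjective {p : ℕ} (lam γ : ℝ) (C Z : Matrix (Fin p) (Fin p) ℝ) : ℝ :=
  lam * Z.trace + γ / 2 * frobSq (Z - C)

section ProxObjective

variable {p : ℕ} {lam γ : ℝ}

lemma proxObjective_transpose_mul_mul {U : Matrix (Fin p) (Fin p) ℝ} (hU : U * Uᵀ = 1)
    (C Z : Matrix (Fin p) (Fin p) ℝ) :
    proxObjective lam γ (Uᵀ * C * U) (Uᵀ * Z * U) = proxObjective lam γ C Z := by
  rw [proxObjective, proxObjective, ← Matrix.sub_mul, ← Matrix.mul_sub,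
    trace_transpose_mul_mul hU, frobSq_transpose_mul_mul hU]

lemma proxObjective_diagonal_le (hγ : 0 < γ) (d : Fin p → ℝ) {W : Matrix (Fin p) (Fin p) ℝ}
    (hW : ∀ i, 0 ≤ W i i) :
    proxObjective lam γ (diagonal d) (diagonal fun i => max (d i - lam / γ) 0) ≤
      proxObjective lam γ (diagonal d) W := calc
  _ = ∑ i, (lam * max (d i - lam / γ) 0 + γ / 2 * (max (d i - lam / γ) 0 - d i) ^ 2) := by
    rw [proxObjective, trace_diagonal, diagonal_sub, frobSq_diagonal, Finset.mul_sum,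
      Finset.mul_sum, ← Finset.sum_add_distrib]
  _ ≤ ∑ i, (lam * W i i + γ / 2 * (W i i - d i) ^ 2) :=
    Finset.sum_le_sum fun i _ => add_mul_sq_max_sub_div_le hγ (hW i)
  _ = lam * W.trace + γ / 2 * ∑ i, (W - diagonal d) i i ^ 2 := by
    simp only [trace, diag_apply, Matrix.sub_apply, diagonal_apply_eq, Finset.mul_sum,
      Finset.sum_add_distrib]
  _ ≤ proxObjective lam γ (diagonal d) W := by
    rw [proxObjective]
    gcongr
    exact sum_sq_diag_le_frobSq _

end ProxObjective

theorem stmt11_general (p : ℕ) (γ lam : ℝ) (hγ : 0 < γ)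
    (U : Matrix (Fin p) (Fin p) ℝ) (d : Fin p → ℝ)
    (hU : U * Uᵀ = 1) (hU' : Uᵀ * U = 1)
    (C : Matrix (Fin p) (Fin p) ℝ) (hC : C = U * Matrix.diagonal d * Uᵀ) :
    let obj : Matrix (Fin p) (Fin p) ℝ → ℝ := fun Z =>
      lam * Z.trace + (γ / 2) * frobSq (Z - C)
    let Zstar : Matrix (Fin p) (Fin p) ℝ :=
      U * Matrix.diagonal (fun i => max (d i - lam / γ) 0) * Uᵀ
    Zstar.PosSemidef ∧
    (∀ Z : Matrix (Fin p) (Fin p) ℝ, Z.IsSymm → Z.PosSemidef →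
      obj Zstar ≤ obj Z) := by
  intro obj Zstar
  have hUH : Uᴴ = Uᵀ := conjTranspose_eq_transpose_of_trivial U
  have hCd : Uᵀ * C * U = diagonal d := hC ▸ transpose_mul_mul_mul_transpose_mul hU' _
  refine ⟨?_, fun Z _ hZ => ?_⟩
  · simpa only [hUH] using
      (posSemidef_diagonal_iff.2 fun i => le_max_right _ _).mul_mul_conjTranspose_same U
  · have hW : (Uᵀ * Z * U).PosSemidef := by
      simpa only [hUH] using hZ.conjTranspose_mul_mul_same U
    calc obj Zstar = proxObjective lam γ (Uᵀ * C * U) (Uᵀ * Zstar * U) :=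
          (proxObjective_transpose_mul_mul hU C Zstar).symm
      _ ≤ proxObjective lam γ (Uᵀ * C * U) (Uᵀ * Z * U) := by
          rw [hCd, transpose_mul_mul_mul_transpose_mul hU']
          exact proxObjective_diagonal_le hγ d fun i => hW.diag_nonneg
      _ = obj Z := proxObjective_transpose_mul_mul hU C Z

theorem stmt11 (p : ℕ) (γ lam : ℝ) (hγ : 0 < γ) (hlam : 0 < lam)
    (U : Matrix (Fin p) (Fin p) ℝ) (d : Fin p → ℝ)
    (hU : U * Uᵀ = 1) (hU' : Uᵀ * U = 1)
    (C : Matrix (Fin p) (Fin p) ℝ) (hC : C = U * Matrix.diagonal d * Uᵀ) :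
    let obj : Matrix (Fin p) (Fin p) ℝ → ℝ := fun Z =>
      lam * Z.trace + (γ / 2) * frobSq (Z - C)
    let Zstar : Matrix (Fin p) (Fin p) ℝ :=
      U * Matrix.diagonal (fun i => max (d i - lam / γ) 0) * Uᵀ
    Zstar.PosSemidef ∧
    (∀ Z : Matrix (Fin p) (Fin p) ℝ, Z.IsSymm → Z.PosSemidef →
      obj Zstar ≤ obj Z) :=
  stmt11_general p γ lam hγ U d hU hU' C hC
end
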